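/- arXiv:1604.01819 — 10 statements merged into one kernel-verified Lean document; each statement's English description precedes it below -/
import Mathlib

section
/- If f : I → ℝ is strictly log-convex and g : I → ℝ is log-convex on an interval I, then f + g is strictly log-convex on I. -/
open Real Set

lemma holder_two (a b c d : ℝ) (ha : 0 < a) (hb : 0 < b) (hc : 0 < c) (hd : 0 < d)
    (l : ℝ) (hl0 : 0 ≤ l) (hl1 : l ≤ 1) :
    a ^ l * b ^ (1 - l) + c ^ l * d ^ (1 - l) ≤ (a + c) ^ l * (b + d) ^ (1 - l) := by
  have hac : 0 < a + c := by linarith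
  have hbd : 0 < b + d := by linarith
  have h1 : (a / (a + c)) ^ l * (b / (b + d)) ^ (1 - l) ≤ l * (a / (a + c)) + (1 - l) * (b / (b + d)) :=
    Real.geom_mean_le_arith_mean2_weighted hl0 (by linarith) (by positivity) (by positivity) (by ring)
  have h2 : (c / (a + c)) ^ l * (d / (b + d)) ^ (1 - l) ≤ l * (c / (a + c)) + (1 - l) * (d / (b + d)) :=
    Real.geom_mean_le_arith_mean2_weighted hl0 (by linarith) (by positivity) (by positivity) (by ring)
  have hsum : (a / (a + c)) ^ l * (b / (b + d)) ^ (1 - l) +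
      (c / (a + c)) ^ l * (d / (b + d)) ^ (1 - l) ≤ 1 := by
    have : l * (a / (a + c)) + (1 - l) * (b / (b + d)) +
        (l * (c / (a + c)) + (1 - l) * (d / (b + d))) = 1 := by
      field_simp; ring
    linarith
  rw [Real.div_rpow ha.le hac.le, Real.div_rpow hb.le hbd.le,
    Real.div_rpow hc.le hac.le, Real.div_rpow hd.le hbd.le] at hsum
  have hacl : 0 < (a + c) ^ l := Real.rpow_pos_of_pos hac l
  have hbdl : 0 < (b + d) ^ (1 - l) := Real.rpow_pos_of_pos hbd (1 - l)
  have := mul_le_mul_of_nonneg_left hsum (le_of_lt (mul_pos hacl hbdl))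
  calc a ^ l * b ^ (1 - l) + c ^ l * d ^ (1 - l)
      = (a + c) ^ l * (b + d) ^ (1 - l) *
        (a ^ l / (a + c) ^ l * (b ^ (1 - l) / (b + d) ^ (1 - l)) +
         c ^ l / (a + c) ^ l * (d ^ (1 - l) / (b + d) ^ (1 - l))) := by
        field_simp
    _ ≤ (a + c) ^ l * (b + d) ^ (1 - l) * 1 := this
    _ = (a + c) ^ l * (b + d) ^ (1 - l) := by ring

/-- The sum of a strictly log-convex function and a log-convex function on an
interval `I` is strictly log-convex. -/
theorem strictLogConvex_add_logConvex
    (I : Set ℝ) (hI : Convex ℝ I) (f g : ℝ → ℝ)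
    (hfpos : ∀ x ∈ I, 0 < f x)
    (hf : ∀ x ∈ I, ∀ y ∈ I, x ≠ y → ∀ l : ℝ, 0 < l → l < 1 →
      f (l * x + (1 - l) * y) < f x ^ l * f y ^ (1 - l))
    (hgpos : ∀ x ∈ I, 0 < g x)
    (hg : ∀ x ∈ I, ∀ y ∈ I, ∀ l : ℝ, 0 ≤ l → l ≤ 1 →
      g (l * x + (1 - l) * y) ≤ g x ^ l * g y ^ (1 - l)) :
    (∀ x ∈ I, 0 < f x + g x) ∧
    ∀ x ∈ I, ∀ y ∈ I, x ≠ y → ∀ l : ℝ, 0 < l → l < 1 →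
      f (l * x + (1 - l) * y) + g (l * x + (1 - l) * y) <
        (f x + g x) ^ l * (f y + g y) ^ (1 - l) := by
  refine ⟨fun x hx => add_pos (hfpos x hx) (hgpos x hx), ?_⟩
  intro x hx y hy hxy l hl0 hl1
  have h1 := hf x hx y hy hxy l hl0 hl1
  have h2 := hg x hx y hy l hl0.le hl1.le
  have := holder_two (f x) (f y) (g x) (g y) (hfpos x hx) (hfpos y hy)
    (hgpos x hx) (hgpos y hy) l hl0.le hl1.le
  linarith
end

section
/- Let D₁, D₂ : [0,∞) → (0,1] be discount functions with D₁(t) = D₂(t)^c for some constant c > 0, c ≠ 1, and let λ ∈ (0,1). Then D = λD₁ + (1-λ)D₂ satisfies: the function z ↦ ln D(D₁⁻¹(e^z)) is strictly convex on (-∞, 0]. -/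
open Real Set

lemma aux_strict (c l : ℝ) (hc : 0 < c) (hc1 : c ≠ 1) (hl0 : 0 < l) (hl1 : l < 1) :
    StrictConvexOn ℝ (Iic 0)
      (fun z => Real.log (l * exp z + (1 - l) * exp (c⁻¹ * z))) := by
  set h₀ : ℝ → ℝ := fun z => l * exp z + (1 - l) * exp (c⁻¹ * z) with hh0
  have hl1' : 0 < 1 - l := by linarith
  have hpos : ∀ z, 0 < h₀ z := fun z =>
    add_pos (mul_pos hl0 (exp_pos _)) (mul_pos hl1' (exp_pos _))
  set h₁ : ℝ → ℝ := fun z => l * exp z + (1 - l) * c⁻¹ * exp (c⁻¹ * z) with hh1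
  set h₂ : ℝ → ℝ := fun z => l * exp z + (1 - l) * c⁻¹ * c⁻¹ * exp (c⁻¹ * z) with hh2
  have hd0 : ∀ z, HasDerivAt h₀ (h₁ z) z := by
    intro z
    have h1 := (Real.hasDerivAt_exp z).const_mul l
    have h2 : HasDerivAt (fun z : ℝ => exp (c⁻¹ * z)) (exp (c⁻¹ * z) * c⁻¹) z :=
      ((hasDerivAt_id z).const_mul c⁻¹).exp.congr_deriv (by simp)
    have := h1.add (h2.const_mul (1 - l))
    exact this.congr_deriv (by ring)
  have hd1 : ∀ z, HasDerivAt h₁ (h₂ z) z := by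
    intro z
    have h1 := (Real.hasDerivAt_exp z).const_mul l
    have h2 : HasDerivAt (fun z : ℝ => exp (c⁻¹ * z)) (exp (c⁻¹ * z) * c⁻¹) z :=
      ((hasDerivAt_id z).const_mul c⁻¹).exp.congr_deriv (by simp)
    have := h1.add (h2.const_mul ((1 - l) * c⁻¹))
    exact this.congr_deriv (by ring)
  have hg : ∀ z, HasDerivAt (fun z => Real.log (h₀ z)) (h₁ z / h₀ z) z := fun z =>
    (hd0 z).log (hpos z).ne'
  have hderiv : deriv (fun z => Real.log (h₀ z)) = fun z => h₁ z / h₀ z := by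
    funext z; exact (hg z).deriv
  have hg2 : ∀ z, HasDerivAt (fun z => h₁ z / h₀ z)
      ((h₂ z * h₀ z - h₁ z * h₁ z) / (h₀ z) ^ 2) z := fun z =>
    (hd1 z).div (hd0 z) (hpos z).ne'
  apply strictConvexOn_of_deriv2_pos (convex_Iic 0)
  · have hcont : Continuous h₀ := by fun_prop
    exact hcont.continuousOn.log fun x _ => (hpos x).ne'
  · intro x hx
    have : deriv (deriv fun z => Real.log (h₀ z)) x
        = (h₂ x * h₀ x - h₁ x * h₁ x) / (h₀ x) ^ 2 := by
      rw [hderiv]; exact (hg2 x).deriv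
    simp only [Function.iterate_succ, Function.iterate_zero, Function.comp_apply, id]
    rw [this]
    apply div_pos _ (pow_pos (hpos x) 2)
    have hnum : h₂ x * h₀ x - h₁ x * h₁ x
        = (l * exp x) * ((1 - l) * exp (c⁻¹ * x)) * (1 - c⁻¹) ^ 2 := by
      simp only [hh0, hh1, hh2]; ring
    rw [hnum]
    have hne : (1 : ℝ) - c⁻¹ ≠ 0 := by
      intro h
      apply hc1
      field_simp at h
      linarith
    exact mul_pos (mul_pos (mul_pos hl0 (exp_pos x)) (mul_pos hl1' (exp_pos (c⁻¹ * x))))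
      (sq_pos_of_ne_zero hne)

/-- If `D₁ = D₂ ^ c` (`c > 0`, `c ≠ 1`) are two discount functions and
`D = λ D₁ + (1-λ) D₂`, then `z ↦ ln D (D₁⁻¹ (e^z))` is strictly convex on `(-∞,0]`. -/
theorem mixture_same_DI_class_strictly_more_DI
    (D₂ : ℝ → ℝ) (c l : ℝ) (hc : 0 < c) (hc1 : c ≠ 1) (hl0 : 0 < l) (hl1 : l < 1)
    (hcont : ContinuousOn D₂ (Ici 0)) (hanti : StrictAntiOn D₂ (Ici 0))
    (hpos : ∀ t ∈ Ici (0:ℝ), 0 < D₂ t) (hle : ∀ t ∈ Ici (0:ℝ), D₂ t ≤ 1)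
    (hD0 : D₂ 0 = 1) (hlim : Filter.Tendsto D₂ Filter.atTop (nhds 0))
    (D₁ : ℝ → ℝ) (hD₁ : ∀ t, D₁ t = D₂ t ^ c)
    (D₁inv : ℝ → ℝ)
    (hinv₁ : ∀ t ∈ Ici (0:ℝ), D₁inv (D₁ t) = t)
    (hinv₂ : ∀ y ∈ Ioc (0:ℝ) 1, D₁ (D₁inv y) = y) :
    StrictConvexOn ℝ (Iic 0)
      (fun z => Real.log (l * D₁ (D₁inv (exp z)) + (1 - l) * D₂ (D₁inv (exp z)))) := by
  have key : ∀ z ∈ Iic (0:ℝ),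
      D₁ (D₁inv (exp z)) = exp z ∧ D₂ (D₁inv (exp z)) = exp (c⁻¹ * z) := by
    intro z hz
    -- find t ≥ 0 with D₂ t = exp (c⁻¹ * z)
    have hy1 : exp (c⁻¹ * z) ≤ 1 := by
      apply exp_le_one_iff.mpr
      have : (0:ℝ) ≤ c⁻¹ := (inv_pos.mpr hc).le
      exact mul_nonpos_of_nonneg_of_nonpos this hz
    have hev : ∀ᶠ T in Filter.atTop, D₂ T < exp (c⁻¹ * z) :=
      hlim.eventually_lt_const (exp_pos _)
    obtain ⟨T, hT⟩ := (hev.and (Filter.eventually_ge_atTop 0)).exists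
    have hsub : Icc (0:ℝ) T ⊆ Ici 0 := fun x hx => hx.1
    have hmem : exp (c⁻¹ * z) ∈ Icc (D₂ T) (D₂ 0) := ⟨hT.1.le, by rw [hD0]; exact hy1⟩
    obtain ⟨t, ht, htD⟩ := intermediate_value_Icc' hT.2 (hcont.mono hsub) hmem
    have ht0 : t ∈ Ici (0:ℝ) := ht.1
    have hD1t : D₁ t = exp z := by
      rw [hD₁, htD, Real.rpow_def_of_pos (exp_pos _), Real.log_exp]
      congr 1
      field_simp
    have hDinv : D₁inv (exp z) = t := by rw [← hD1t, hinv₁ t ht0]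
    rw [hDinv]
    exact ⟨hD1t, htD⟩
  have hg := aux_strict c l hc hc1 hl0 hl1
  refine ⟨convex_Iic 0, fun x hx y hy hxy a b ha hb hab => ?_⟩
  have hmem : a • x + b • y ∈ Iic (0:ℝ) := (convex_Iic 0) hx hy ha.le hb.le hab
  have e1 := key x hx
  have e2 := key y hy
  have e3 := key _ hmem
  simp only [e1.1, e1.2, e2.1, e2.2, e3.1, e3.2]
  exact hg.2 hx hy hxy ha hb hab
end

section
/- Let D₁, D₂ : [0,∞) → (0,1] be discount functions (continuous, strictly decreasing, D(0)=1, tending to 0) and λ ∈ (0,1). If z ↦ D₁(D₂⁻¹(e^z)) is strictly log-convex on (-∞,0], then z ↦ (λD₁ + (1-λ)D₂)(D₂⁻¹(e^z)) is strictly log-convex on (-∞,0]. -/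
open Real Set

lemma holder2 {a b x₁ x₂ y₁ y₂ : ℝ} (ha : 0 < a) (hb : 0 < b) (hab : a + b = 1)
    (hx₁ : 0 < x₁) (hx₂ : 0 < x₂) (hy₁ : 0 < y₁) (hy₂ : 0 < y₂) :
    x₁ ^ a * y₁ ^ b + x₂ ^ a * y₂ ^ b ≤ (x₁ + x₂) ^ a * (y₁ + y₂) ^ b := by
  have hX : 0 < x₁ + x₂ := by linarith
  have hY : 0 < y₁ + y₂ := by linarith
  have h1 : (x₁/(x₁+x₂)) ^ a * (y₁/(y₁+y₂)) ^ b ≤ a * (x₁/(x₁+x₂)) + b * (y₁/(y₁+y₂)) :=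
    Real.geom_mean_le_arith_mean2_weighted ha.le hb.le (by positivity) (by positivity) hab
  have h2 : (x₂/(x₁+x₂)) ^ a * (y₂/(y₁+y₂)) ^ b ≤ a * (x₂/(x₁+x₂)) + b * (y₂/(y₁+y₂)) :=
    Real.geom_mean_le_arith_mean2_weighted ha.le hb.le (by positivity) (by positivity) hab
  have e1 : x₁ ^ a * y₁ ^ b = (x₁+x₂)^a * (y₁+y₂)^b * ((x₁/(x₁+x₂))^a * (y₁/(y₁+y₂))^b) := by
    rw [Real.div_rpow hx₁.le hX.le, Real.div_rpow hy₁.le hY.le]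
    field_simp
  have e2 : x₂ ^ a * y₂ ^ b = (x₁+x₂)^a * (y₁+y₂)^b * ((x₂/(x₁+x₂))^a * (y₂/(y₁+y₂))^b) := by
    rw [Real.div_rpow hx₂.le hX.le, Real.div_rpow hy₂.le hY.le]
    field_simp
  have hP : (0:ℝ) < (x₁+x₂)^a * (y₁+y₂)^b := by positivity
  have hs : a * (x₁/(x₁+x₂)) + b * (y₁/(y₁+y₂)) + (a * (x₂/(x₁+x₂)) + b * (y₂/(y₁+y₂))) = 1 := by
    field_simp
    linear_combination (x₁*y₁ + x₁*y₂ + y₁*x₂ + y₂*x₂) * hab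
  calc x₁ ^ a * y₁ ^ b + x₂ ^ a * y₂ ^ b
      ≤ (x₁+x₂)^a * (y₁+y₂)^b * ((a * (x₁/(x₁+x₂)) + b * (y₁/(y₁+y₂))) + (a * (x₂/(x₁+x₂)) + b * (y₂/(y₁+y₂)))) := by
        rw [e1, e2, ← mul_add]
        exact mul_le_mul_of_nonneg_left (by linarith) hP.le
    _ = (x₁+x₂)^a * (y₁+y₂)^b := by rw [hs, mul_one]

/-- If `z ↦ D₁(D₂⁻¹(e^z))` is strictly log-convex on `(-∞,0]`, then for any mixture
weight `λ ∈ (0,1)`, `z ↦ (λD₁ + (1-λ)D₂)(D₂⁻¹(e^z))` is strictly log-convex there. -/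
theorem mixture_strictly_more_DI_than_less_DI_component
    (D₁ D₂ : ℝ → ℝ) (l : ℝ) (hl0 : 0 < l) (hl1 : l < 1)
    (hcont₁ : ContinuousOn D₁ (Ici 0)) (hanti₁ : StrictAntiOn D₁ (Ici 0))
    (hpos₁ : ∀ t ∈ Ici (0:ℝ), 0 < D₁ t) (hle₁ : ∀ t ∈ Ici (0:ℝ), D₁ t ≤ 1)
    (hD₁0 : D₁ 0 = 1) (hlim₁ : Filter.Tendsto D₁ Filter.atTop (nhds 0))
    (hcont₂ : ContinuousOn D₂ (Ici 0)) (hanti₂ : StrictAntiOn D₂ (Ici 0))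
    (hpos₂ : ∀ t ∈ Ici (0:ℝ), 0 < D₂ t) (hle₂ : ∀ t ∈ Ici (0:ℝ), D₂ t ≤ 1)
    (hD₂0 : D₂ 0 = 1) (hlim₂ : Filter.Tendsto D₂ Filter.atTop (nhds 0))
    (D₂inv : ℝ → ℝ)
    (hinv₁ : ∀ t ∈ Ici (0:ℝ), D₂inv (D₂ t) = t)
    (hinv₂ : ∀ y ∈ Ioc (0:ℝ) 1, D₂ (D₂inv y) = y)
    (hstrict : StrictConvexOn ℝ (Iic 0) (fun z => Real.log (D₁ (D₂inv (exp z))))) :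
    StrictConvexOn ℝ (Iic 0)
      (fun z => Real.log (l * D₁ (D₂inv (exp z)) + (1 - l) * D₂ (D₂inv (exp z)))) := by
  have hl1' : (0:ℝ) < 1 - l := by linarith
  have hexp : ∀ z ∈ Iic (0:ℝ), exp z ∈ Ioc (0:ℝ) 1 := fun z hz => ⟨exp_pos z, exp_le_one_iff.2 hz⟩
  have hinvnn : ∀ z ∈ Iic (0:ℝ), 0 ≤ D₂inv (exp z) := by
    intro z hz
    obtain ⟨T, hT1, hT2⟩ :=
      ((hlim₂.eventually_lt_const (exp_pos z)).and (Filter.eventually_ge_atTop 0)).exists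
    have hsub : Icc (D₂ T) (D₂ 0) ⊆ D₂ '' Icc 0 T :=
      intermediate_value_Icc' hT2 (hcont₂.mono (Icc_subset_Ici_self))
    have hmem : exp z ∈ Icc (D₂ T) (D₂ 0) := ⟨hT1.le, by rw [hD₂0]; exact exp_le_one_iff.2 hz⟩
    obtain ⟨s, hs, hsD⟩ := hsub hmem
    rw [← hsD, hinv₁ s hs.1]
    exact hs.1
  have fpos : ∀ z ∈ Iic (0:ℝ), 0 < D₁ (D₂inv (exp z)) := fun z hz => hpos₁ _ (hinvnn z hz)
  refine ⟨convex_Iic 0, ?_⟩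
  intro x hx y hy hxy a b ha hb hab
  simp only [smul_eq_mul]
  have hc : a * x + b * y ∈ Iic (0:ℝ) := by
    have h1 : a * x ≤ 0 := mul_nonpos_of_nonneg_of_nonpos ha.le hx
    have h2 : b * y ≤ 0 := mul_nonpos_of_nonneg_of_nonpos hb.le hy
    simpa using add_nonpos h1 h2
  set fx := D₁ (D₂inv (exp x)) with hfx
  set fy := D₁ (D₂inv (exp y)) with hfy
  set fc := D₁ (D₂inv (exp (a * x + b * y))) with hfc
  have hfxp : 0 < fx := fpos x hx
  have hfyp : 0 < fy := fpos y hy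
  have hfcp : 0 < fc := fpos _ hc
  rw [hinv₂ _ (hexp x hx), hinv₂ _ (hexp y hy), hinv₂ _ (hexp _ hc)]
  have hL : Real.log fc < a * Real.log fx + b * Real.log fy := by
    have := hstrict.2 hx hy hxy ha hb hab
    simpa using this
  -- fc < fx^a * fy^b
  have hfcl : fc < fx ^ a * fy ^ b := by
    rw [Real.rpow_def_of_pos hfxp, Real.rpow_def_of_pos hfyp, ← Real.exp_add,
      ← Real.exp_log hfcp]
    exact Real.exp_lt_exp.2 (by linarith)
  have hll : (l * fx) ^ a * (l * fy) ^ b = l * (fx ^ a * fy ^ b) := by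
    rw [Real.mul_rpow hl0.le hfxp.le, Real.mul_rpow hl0.le hfyp.le]
    have : l ^ a * l ^ b = l := by rw [← Real.rpow_add hl0, hab, Real.rpow_one]
    calc l ^ a * fx ^ a * (l ^ b * fy ^ b) = (l ^ a * l ^ b) * (fx ^ a * fy ^ b) := by ring
      _ = l * (fx ^ a * fy ^ b) := by rw [this]
  have h2 : (1 - l) * exp (a * x + b * y)
      = ((1 - l) * exp x) ^ a * ((1 - l) * exp y) ^ b := by
    rw [Real.mul_rpow hl1'.le (exp_pos x).le, Real.mul_rpow hl1'.le (exp_pos y).le]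
    have h3 : (1 - l) ^ a * (1 - l) ^ b = 1 - l := by
      rw [← Real.rpow_add hl1', hab, Real.rpow_one]
    have hex : exp x ^ a = exp (a * x) := by
      rw [Real.rpow_def_of_pos (exp_pos x), Real.log_exp]; ring_nf
    have hey : exp y ^ b = exp (b * y) := by
      rw [Real.rpow_def_of_pos (exp_pos y), Real.log_exp]; ring_nf
    rw [hex, hey, Real.exp_add]
    calc (1 - l) * (exp (a*x) * exp (b*y))
        = ((1 - l) ^ a * (1 - l) ^ b) * (exp (a*x) * exp (b*y)) := by rw [h3]
      _ = (1 - l) ^ a * exp (a*x) * ((1 - l) ^ b * exp (b*y)) := by ring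
  have hPx : 0 < l * fx + (1 - l) * exp x := by positivity
  have hPy : 0 < l * fy + (1 - l) * exp y := by positivity
  have hhold := holder2 ha hb hab (by positivity : (0:ℝ) < l * fx)
    (by positivity : (0:ℝ) < (1 - l) * exp x) (by positivity : (0:ℝ) < l * fy)
    (by positivity : (0:ℝ) < (1 - l) * exp y)
  have hmain : l * fc + (1 - l) * exp (a * x + b * y)
      < (l * fx + (1 - l) * exp x) ^ a * (l * fy + (1 - l) * exp y) ^ b := by
    have h1 : l * fc < (l * fx) ^ a * (l * fy) ^ b := by
      rw [hll]; exact (mul_lt_mul_iff_right₀ hl0).2 hfcl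
    rw [h2]
    linarith
  have := Real.log_lt_log (by positivity) hmain
  rw [Real.log_mul (by positivity) (by positivity), Real.log_rpow hPx, Real.log_rpow hPy] at this
  exact this
end

section
/- Let D₁, D₂ : [0,∞) → (0,1] be twice continuously differentiable discount functions with D_i' < 0. Define I_i(t) = -D_i''(t)/D_i'(t) + D_i'(t)/D_i(t). Then ln D₁ ∘ (ln D₂)⁻¹ is convex on (-∞,0] if and only if I₁(t) ≥ I₂(t) for all t ≥ 0. -/
open Real Set Filter Topology

/-!
Put `f₁ = ln D₁`, `f₂ = ln D₂` and `h = f₁ ∘ f₂⁻¹`. Since `f₂` is strictly decreasing, the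
slopes of `h` are the Cauchy quotients `(f₁ b - f₁ a) / (f₂ b - f₂ a)` read in reverse order,
so `h` is convex iff these quotients decrease along `[0,∞)`. By Cauchy's mean value theorem and
a limit argument this says that `φ = f₁' / f₂'` is antitone, i.e. `φ' ≤ 0`. Finally
`φ' = φ · (I₂ - I₁)` with `φ > 0`.
-/

noncomputable def cauchySlope (f g : ℝ → ℝ) (a b : ℝ) : ℝ := (f b - f a) / (g b - g a)

def CauchySlopeAntiOn (f g : ℝ → ℝ) (s : Set ℝ) : Prop :=
  ∀ a ∈ s, ∀ b ∈ s, ∀ c ∈ s, a < b → b < c → cauchySlope f g b c ≤ cauchySlope f g a b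

lemma cauchySlope_comm (f g : ℝ → ℝ) (a b : ℝ) :
    cauchySlope f g a b = cauchySlope f g b a := by
  rw [cauchySlope, cauchySlope, ← neg_sub (f a), ← neg_sub (g a), neg_div_neg_eq]

lemma tendsto_cauchySlope_nhdsNE {f g : ℝ → ℝ} {f' g' x : ℝ} (hf : HasDerivAt f f' x)
    (hg : HasDerivAt g g' x) (hg' : g' ≠ 0) :
    Tendsto (cauchySlope f g x) (𝓝[≠] x) (𝓝 (f' / g')) := by
  refine ((hasDerivAt_iff_tendsto_slope.mp hf).div
    (hasDerivAt_iff_tendsto_slope.mp hg) hg').congr' ?_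
  filter_upwards [self_mem_nhdsWithin] with y hy
  change slope f x y / slope g x y = _
  rw [slope_def_field, slope_def_field, div_div_div_cancel_right₀ (sub_ne_zero.mpr hy),
    cauchySlope]

lemma ne_of_hasDerivAt_ne_zero {g g' : ℝ → ℝ} {a b : ℝ} (hab : a < b)
    (hg : ∀ x ∈ Icc a b, HasDerivAt g (g' x) x) (hg' : ∀ x ∈ Ioo a b, g' x ≠ 0) :
    g a ≠ g b := by
  intro hgab
  obtain ⟨c, hc, hc0⟩ := exists_hasDerivAt_eq_zero hab
    (fun x hx => (hg x hx).continuousAt.continuousWithinAt) hgab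
    (fun x hx => hg x (Ioo_subset_Icc_self hx))
  exact hg' c hc hc0

lemma exists_cauchySlope_eq_div {f g f' g' : ℝ → ℝ} {a b : ℝ} (hab : a < b)
    (hf : ∀ x ∈ Icc a b, HasDerivAt f (f' x) x) (hg : ∀ x ∈ Icc a b, HasDerivAt g (g' x) x)
    (hg' : ∀ x ∈ Ioo a b, g' x ≠ 0) :
    ∃ c ∈ Ioo a b, cauchySlope f g a b = f' c / g' c := by
  obtain ⟨c, hc, hcauchy⟩ := exists_ratio_hasDerivAt_eq_ratio_slope f f' hab
    (fun x hx => (hf x hx).continuousAt.continuousWithinAt)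
    (fun x hx => hf x (Ioo_subset_Icc_self hx))
    g g' (fun x hx => (hg x hx).continuousAt.continuousWithinAt)
    (fun x hx => hg x (Ioo_subset_Icc_self hx))
  have hgab : g b - g a ≠ 0 := sub_ne_zero.mpr (ne_of_hasDerivAt_ne_zero hab hg hg').symm
  refine ⟨c, hc, ?_⟩
  rw [cauchySlope, div_eq_div_iff hgab (hg' c hc)]
  linear_combination -hcauchy

section DerivRatio

variable {f g f' g' : ℝ → ℝ} {s : Set ℝ}

lemma CauchySlopeAntiOn.of_antitoneOn (hs : Convex ℝ s) (hf : ∀ x ∈ s, HasDerivAt f (f' x) x)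
    (hg : ∀ x ∈ s, HasDerivAt g (g' x) x) (hg' : ∀ x ∈ s, g' x ≠ 0)
    (hφ : AntitoneOn (fun x => f' x / g' x) s) : CauchySlopeAntiOn f g s := by
  intro a ha b hb c hc hab hbc
  have hIcc : ∀ {x y}, x ∈ s → y ∈ s → Icc x y ⊆ s := fun hx hy => hs.ordConnected.out hx hy
  obtain ⟨ξ, hξ, hξeq⟩ := exists_cauchySlope_eq_div hab (fun x hx => hf x (hIcc ha hb hx))
    (fun x hx => hg x (hIcc ha hb hx)) (fun x hx => hg' x (hIcc ha hb (Ioo_subset_Icc_self hx)))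
  obtain ⟨η, hη, hηeq⟩ := exists_cauchySlope_eq_div hbc (fun x hx => hf x (hIcc hb hc hx))
    (fun x hx => hg x (hIcc hb hc hx)) (fun x hx => hg' x (hIcc hb hc (Ioo_subset_Icc_self hx)))
  rw [hξeq, hηeq]
  exact hφ (hIcc ha hb (Ioo_subset_Icc_self hξ)) (hIcc hb hc (Ioo_subset_Icc_self hη))
    (hξ.2.trans hη.1).le

lemma CauchySlopeAntiOn.antitoneOn (hanti : CauchySlopeAntiOn f g s) (hs : Convex ℝ s)
    (hf : ∀ x ∈ s, HasDerivAt f (f' x) x) (hg : ∀ x ∈ s, HasDerivAt g (g' x) x)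
    (hg' : ∀ x ∈ s, g' x ≠ 0) : AntitoneOn (fun x => f' x / g' x) s := by
  refine antitoneOn_iff_forall_lt.mpr fun a ha b hb hab => ?_
  have hIcc : Icc a b ⊆ s := hs.ordConnected.out ha hb
  have hgab : g a ≠ g b := ne_of_hasDerivAt_ne_zero hab (fun x hx => hg x (hIcc hx))
    (fun x hx => hg' x (hIcc (Ioo_subset_Icc_self hx)))
  have hmid : ∀ x ∈ Ioo a b, cauchySlope f g x b ≤ cauchySlope f g a x := fun x hx =>
    hanti a ha x (hIcc (Ioo_subset_Icc_self hx)) b hb hx.1 hx.2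
  have hcont : ∀ {x y}, y ∈ s → g y ≠ g x → ContinuousAt (cauchySlope f g x) y :=
    fun hy hyx => ((hf _ hy).continuousAt.sub continuousAt_const).div
      ((hg _ hy).continuousAt.sub continuousAt_const) (sub_ne_zero.mpr hyx)
  -- let `x → b⁻`, resp. `x → a⁺`, in `hmid`
  have hb_le : f' b / g' b ≤ cauchySlope f g a b := by
    have := right_nhdsWithin_Ioo_neBot hab
    refine le_of_tendsto_of_tendsto ?_ ((hcont hb hgab.symm).mono_left nhdsWithin_le_nhds)
      (eventually_nhdsWithin_of_forall hmid)
    simp_rw [cauchySlope_comm f g _ b]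
    exact (tendsto_cauchySlope_nhdsNE (hf b hb) (hg b hb) (hg' b hb)).mono_left
      (nhdsWithin_mono _ fun x hx => hx.2.ne)
  have hle_a : cauchySlope f g a b ≤ f' a / g' a := by
    have := left_nhdsWithin_Ioo_neBot hab
    refine le_of_tendsto_of_tendsto ?_ ((tendsto_cauchySlope_nhdsNE (hf a ha) (hg a ha)
      (hg' a ha)).mono_left (nhdsWithin_mono _ fun x hx => hx.1.ne'))
      (eventually_nhdsWithin_of_forall hmid)
    simp_rw [cauchySlope_comm f g _ b]
    exact (hcont ha hgab).mono_left nhdsWithin_le_nhds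
  exact hb_le.trans hle_a

lemma cauchySlopeAntiOn_iff_antitoneOn (hs : Convex ℝ s) (hf : ∀ x ∈ s, HasDerivAt f (f' x) x)
    (hg : ∀ x ∈ s, HasDerivAt g (g' x) x) (hg' : ∀ x ∈ s, g' x ≠ 0) :
    CauchySlopeAntiOn f g s ↔ AntitoneOn (fun x => f' x / g' x) s :=
  ⟨fun h => h.antitoneOn hs hf hg hg', CauchySlopeAntiOn.of_antitoneOn hs hf hg hg'⟩

end DerivRatio

lemma convexOn_comp_iff_cauchySlopeAntiOn {f φ ψ : ℝ → ℝ} {s t : Set ℝ} (ht : Convex ℝ t)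
    (hφ : StrictAntiOn φ s) (hφst : MapsTo φ s t) (hψts : MapsTo ψ t s)
    (hinv : InvOn ψ φ s t) :
    ConvexOn ℝ t (fun z => f (ψ z)) ↔ CauchySlopeAntiOn f φ s := by
  have hψ : StrictAntiOn ψ t := fun x hx y hy hxy =>
    (hφ.lt_iff_gt (hψts hx) (hψts hy)).mp (by rwa [hinv.2 hx, hinv.2 hy])
  simp only [convexOn_iff_slope_mono_adjacent, ht, true_and]
  constructor
  · intro hconv a ha b hb c hc hab hbc
    have key := hconv (hφst hc) (hφst ha) (hφ hb hc hbc) (hφ ha hb hab)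
    rw [hinv.1 ha, hinv.1 hb, hinv.1 hc] at key
    rwa [cauchySlope_comm f φ b c, cauchySlope_comm f φ a b]
  · intro hanti x y z hx hz hxy hyz
    have hy : y ∈ t := ht.ordConnected.out hx hz ⟨hxy.le, hyz.le⟩
    have key := hanti _ (hψts hz) _ (hψts hy) _ (hψts hx) (hψ hy hz hyz) (hψ hx hy hxy)
    rw [cauchySlope_comm f φ (ψ y), cauchySlope_comm f φ (ψ z)] at key
    simpa only [cauchySlope, hinv.2 hx, hinv.2 hy, hinv.2 hz] using key

lemma antitoneOn_Ici_iff_forall_deriv_nonpos {f f' : ℝ → ℝ} {a : ℝ}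
    (hf : ∀ x ∈ Ici a, HasDerivAt f (f' x) x) :
    AntitoneOn f (Ici a) ↔ ∀ x ∈ Ici a, f' x ≤ 0 := by
  constructor
  · intro hanti x hx
    refine (hf x hx).hasDerivWithinAt.nonpos_of_antitoneOn ?_
      (hanti.mono (Ici_subset_Ici.mpr hx))
    rw [accPt_principal_iff_nhdsWithin]
    exact (inferInstance : (𝓝[>] x).NeBot).mono
      (nhdsWithin_mono _ fun y hy => ⟨mem_Ici.mpr hy.le, hy.ne'⟩)
  · intro hf'
    refine antitoneOn_of_hasDerivWithinAt_nonpos (convex_Ici a)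
      (fun x hx => (hf x hx).continuousAt.continuousWithinAt)
      (fun x hx => (hf x (interior_subset hx)).hasDerivWithinAt)
      (fun x hx => hf' x (interior_subset hx))

noncomputable def decreasingImpatienceIndex (D D' D'' : ℝ → ℝ) (t : ℝ) : ℝ :=
  -(D'' t) / D' t + D' t / D t

lemma hasDerivAt_logDeriv_div_logDeriv {D₁ D₁' D₁'' D₂ D₂' D₂'' : ℝ → ℝ} {t : ℝ}
    (hD₁ : HasDerivAt D₁ (D₁' t) t) (hD₁' : HasDerivAt D₁' (D₁'' t) t)
    (hD₂ : HasDerivAt D₂ (D₂' t) t) (hD₂' : HasDerivAt D₂' (D₂'' t) t)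
    (h₁ : D₁ t ≠ 0) (h₁' : D₁' t ≠ 0) (h₂ : D₂ t ≠ 0) (h₂' : D₂' t ≠ 0) :
    HasDerivAt (fun t => (D₁' t / D₁ t) / (D₂' t / D₂ t))
      ((D₁' t / D₁ t) / (D₂' t / D₂ t) * (decreasingImpatienceIndex D₂ D₂' D₂'' t -
        decreasingImpatienceIndex D₁ D₁' D₁'' t)) t := by
  refine ((hD₁'.div hD₁ h₁).div (hD₂'.div hD₂ h₂) (div_ne_zero h₂' h₂)).congr_deriv ?_
  simp only [decreasingImpatienceIndex, Pi.div_apply]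
  field_simp
  ring

theorem more_DI_iff_index_ge_general
    (D₁ D₁' D₁'' D₂ D₂' D₂'' : ℝ → ℝ)
    (hD₁ : ∀ t, HasDerivAt D₁ (D₁' t) t) (hD₁' : ∀ t, HasDerivAt D₁' (D₁'' t) t)
    (hD₂ : ∀ t, HasDerivAt D₂ (D₂' t) t) (hD₂' : ∀ t, HasDerivAt D₂' (D₂'' t) t)
    (hpos₁ : ∀ t ∈ Ici (0:ℝ), 0 < D₁ t)
    (hneg₁ : ∀ t ∈ Ici (0:ℝ), D₁' t < 0)
    (hpos₂ : ∀ t ∈ Ici (0:ℝ), 0 < D₂ t) (hle₂ : ∀ t ∈ Ici (0:ℝ), D₂ t ≤ 1)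
    (hneg₂ : ∀ t ∈ Ici (0:ℝ), D₂' t < 0)
    (g₂ : ℝ → ℝ)  -- the inverse of ln D₂ : [0,∞) → (-∞,0]
    (hg₂maps : MapsTo g₂ (Iic 0) (Ici 0))
    (hg₂left : ∀ t ∈ Ici (0:ℝ), g₂ (Real.log (D₂ t)) = t)
    (hg₂right : ∀ z ∈ Iic (0:ℝ), Real.log (D₂ (g₂ z)) = z) :
    ConvexOn ℝ (Iic 0) (fun z => Real.log (D₁ (g₂ z))) ↔
      ∀ t ∈ Ici (0:ℝ),
        -(D₂'' t) / D₂' t + D₂' t / D₂ t ≤ -(D₁'' t) / D₁' t + D₁' t / D₁ t := by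
  have hf₁ : ∀ t ∈ Ici (0:ℝ), HasDerivAt (fun t => log (D₁ t)) (D₁' t / D₁ t) t :=
    fun t ht => (hD₁ t).log (hpos₁ t ht).ne'
  have hf₂ : ∀ t ∈ Ici (0:ℝ), HasDerivAt (fun t => log (D₂ t)) (D₂' t / D₂ t) t :=
    fun t ht => (hD₂ t).log (hpos₂ t ht).ne'
  have hf₂_neg : ∀ t ∈ Ici (0:ℝ), D₂' t / D₂ t < 0 :=
    fun t ht => div_neg_of_neg_of_pos (hneg₂ t ht) (hpos₂ t ht)
  have hf₂_anti : StrictAntiOn (fun t => log (D₂ t)) (Ici 0) :=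
    strictAntiOn_of_hasDerivWithinAt_neg (convex_Ici 0)
      (fun t ht => (hf₂ t ht).continuousAt.continuousWithinAt)
      (fun t ht => (hf₂ t (interior_subset ht)).hasDerivWithinAt)
      (fun t ht => hf₂_neg t (interior_subset ht))
  have hconvex := convexOn_comp_iff_cauchySlopeAntiOn (f := fun t => log (D₁ t)) (convex_Iic 0)
    hf₂_anti (fun t ht => log_nonpos (hpos₂ t ht).le (hle₂ t ht)) hg₂maps ⟨hg₂left, hg₂right⟩
  have hslopes := cauchySlopeAntiOn_iff_antitoneOn (convex_Ici 0) hf₁ hf₂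
    fun t ht => (hf₂_neg t ht).ne
  have hderiv := antitoneOn_Ici_iff_forall_deriv_nonpos fun t ht =>
    hasDerivAt_logDeriv_div_logDeriv (hD₁ t) (hD₁' t) (hD₂ t) (hD₂' t)
      (hpos₁ t ht).ne' (hneg₁ t ht).ne (hpos₂ t ht).ne' (hneg₂ t ht).ne
  refine hconvex.trans <| hslopes.trans <| hderiv.trans <| forall₂_congr fun t ht => ?_
  have hφ : 0 < (D₁' t / D₁ t) / (D₂' t / D₂ t) :=
    div_pos_of_neg_of_neg (div_neg_of_neg_of_pos (hneg₁ t ht) (hpos₁ t ht)) (hf₂_neg t ht)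
  exact (smul_nonpos_iff_nonpos_of_pos_left hφ).trans sub_nonpos

/-- Comparative DI via the index of DI: `ln D₁ ∘ (ln D₂)⁻¹` is convex on `(-∞,0]` iff
`I₁(t) ≥ I₂(t)` for all `t ≥ 0`, where `Iᵢ = -Dᵢ''/Dᵢ' + Dᵢ'/Dᵢ`. -/
theorem more_DI_iff_index_ge
    (D₁ D₁' D₁'' D₂ D₂' D₂'' : ℝ → ℝ)
    (hD₁ : ∀ t, HasDerivAt D₁ (D₁' t) t) (hD₁' : ∀ t, HasDerivAt D₁' (D₁'' t) t)
    (hD₁''cont : Continuous D₁'')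
    (hD₂ : ∀ t, HasDerivAt D₂ (D₂' t) t) (hD₂' : ∀ t, HasDerivAt D₂' (D₂'' t) t)
    (hD₂''cont : Continuous D₂'')
    (hpos₁ : ∀ t ∈ Ici (0:ℝ), 0 < D₁ t) (hle₁ : ∀ t ∈ Ici (0:ℝ), D₁ t ≤ 1)
    (hneg₁ : ∀ t ∈ Ici (0:ℝ), D₁' t < 0) (hD₁0 : D₁ 0 = 1)
    (hlim₁ : Filter.Tendsto D₁ Filter.atTop (nhds 0))
    (hpos₂ : ∀ t ∈ Ici (0:ℝ), 0 < D₂ t) (hle₂ : ∀ t ∈ Ici (0:ℝ), D₂ t ≤ 1)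
    (hneg₂ : ∀ t ∈ Ici (0:ℝ), D₂' t < 0) (hD₂0 : D₂ 0 = 1)
    (hlim₂ : Filter.Tendsto D₂ Filter.atTop (nhds 0))
    (g₂ : ℝ → ℝ)  -- the inverse of ln D₂ : [0,∞) → (-∞,0]
    (hg₂maps : MapsTo g₂ (Iic 0) (Ici 0))
    (hg₂left : ∀ t ∈ Ici (0:ℝ), g₂ (Real.log (D₂ t)) = t)
    (hg₂right : ∀ z ∈ Iic (0:ℝ), Real.log (D₂ (g₂ z)) = z) :
    ConvexOn ℝ (Iic 0) (fun z => Real.log (D₁ (g₂ z))) ↔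
      ∀ t ∈ Ici (0:ℝ),
        -(D₂'' t) / D₂' t + D₂' t / D₂ t ≤ -(D₁'' t) / D₁' t + D₁' t / D₁ t :=
  more_DI_iff_index_ge_general D₁ D₁' D₁'' D₂ D₂' D₂'' hD₁ hD₁' hD₂ hD₂' hpos₁ hneg₁ hpos₂ hle₂
    hneg₂ g₂ hg₂maps hg₂left hg₂right
end

section
/- Let D₁, ..., Dₙ : [0,∞) → (0,1] be twice continuously differentiable, strictly decreasing discount functions, each with non-increasing time preference rate r_i = -D_i'/D_i. Then for any weights λ_i > 0 summing to 1, the mixture D = Σ λ_i D_i has non-increasing time preference rate r = -D'/D; moreover r'(t) = Σ_i (λ_i D_i(t)/D(t)) r_i'(t) - (Σ_{i<j} λ_i λ_j D_i(t) D_j(t)(r_i(t) - r_j(t))²)/D(t)². -/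
/-!
Writing `aᵢ = λᵢDᵢ` and using `Dᵢ' = -rᵢDᵢ`, `Dᵢ'' = (rᵢ² - rᵢ')Dᵢ`, the quotient rule gives
`r' = Σ (aᵢ/D) rᵢ' - ((Σ aᵢ)(Σ aᵢrᵢ²) - (Σ aᵢrᵢ)²)/D²`. By Lagrange's identity the bracket is
`Σ_{i<j} aᵢaⱼ(rᵢ - rⱼ)²`: the mixture rate falls by the weighted average of the component
slopes plus a weighted variance of the component rates, so both parts are nonpositive.
-/

open Set Finset

theorem sum_sum_ite_lt_mul_mul_sub_sq {ι R : Type*} [Fintype ι] [LinearOrder ι] [Field R]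
    [CharZero R] (a q : ι → R) :
    ∑ i, ∑ j, (if i < j then a i * a j * (q i - q j) ^ 2 else 0)
      = (∑ i, a i) * ∑ i, a i * q i ^ 2 - (∑ i, a i * q i) ^ 2 := by
  have hfull : ∑ i, ∑ j, a i * a j * (q i - q j) ^ 2
      = 2 * ((∑ i, a i) * ∑ i, a i * q i ^ 2 - (∑ i, a i * q i) ^ 2) := by
    have hexpand : ∀ i j, a i * a j * (q i - q j) ^ 2
        = a i * (a j * q j ^ 2) + a i * q i ^ 2 * a j - 2 * (a i * q i * (a j * q j)) :=
      fun i j => by ring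
    simp only [hexpand, sum_add_distrib, sum_sub_distrib, ← mul_sum, ← sum_mul]
    ring
  have hswap : ∑ i, ∑ j, (if i < j then a i * a j * (q i - q j) ^ 2 else 0)
      = ∑ i, ∑ j, (if j < i then a i * a j * (q i - q j) ^ 2 else 0) := by
    rw [sum_comm]
    refine sum_congr rfl fun i _ => sum_congr rfl fun j _ => ?_
    split_ifs <;> ring
  have hsplit : ∑ i, ∑ j, a i * a j * (q i - q j) ^ 2
      = ∑ i, ∑ j, ((if i < j then a i * a j * (q i - q j) ^ 2 else 0)
          + if j < i then a i * a j * (q i - q j) ^ 2 else 0) := by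
    refine sum_congr rfl fun i _ => sum_congr rfl fun j _ => ?_
    rcases lt_trichotomy i j with h | rfl | h
    · simp [h, h.not_gt]
    · simp
    · simp [h, h.not_gt]
  simp only [sum_add_distrib, ← hswap] at hsplit
  linear_combination (hfull - hsplit) / 2

theorem hasDerivAt_neg_div {f f' : ℝ → ℝ} {f'' t : ℝ} (hf : HasDerivAt f (f' t) t)
    (hf' : HasDerivAt f' f'' t) (ht : f t ≠ 0) :
    HasDerivAt (fun s => -f' s / f s) ((f' t ^ 2 - f'' * f t) / f t ^ 2) t :=
  (hf'.fun_neg.fun_div hf ht).congr_deriv (by ring)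

theorem eq_sq_sub_deriv_mul_of_hasDerivAt_neg_div {f f' r : ℝ → ℝ} {f'' r' t : ℝ}
    (hf : HasDerivAt f (f' t) t) (hf' : HasDerivAt f' f'' t) (ht : f t ≠ 0)
    (hr : r = fun s => -f' s / f s) (hr' : HasDerivAt r r' t) :
    f'' = (r t ^ 2 - r') * f t := by
  subst hr
  rw [hr'.unique (hasDerivAt_neg_div hf hf' ht)]
  field_simp
  ring

theorem mixture_rate_deriv_eq {ι : Type*} [Fintype ι] [LinearOrder ι] (a q q' : ι → ℝ)
    (ha : ∑ i, a i ≠ 0) :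
    ((∑ i, a i * q i) ^ 2 - (∑ i, a i * (q i ^ 2 - q' i)) * ∑ i, a i) / (∑ i, a i) ^ 2
      = ∑ i, a i / (∑ j, a j) * q' i
        - (∑ i, ∑ j, if i < j then a i * a j * (q i - q j) ^ 2 else 0) / (∑ j, a j) ^ 2 := by
  have hweighted : ∑ i, a i / (∑ j, a j) * q' i = (∑ i, a i * q' i) / ∑ j, a j := by
    rw [sum_div]
    exact sum_congr rfl fun i _ => by ring
  rw [sum_sum_ite_lt_mul_mul_sub_sq, hweighted]
  simp only [mul_sub, sum_sub_distrib]
  field_simp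
  ring

theorem antitoneOn_of_hasDerivAt_nonpos {s : Set ℝ} (hs : Convex ℝ s) {f f' : ℝ → ℝ}
    (hf : ∀ x ∈ s, HasDerivAt f (f' x) x) (hf' : ∀ x ∈ s, f' x ≤ 0) : AntitoneOn f s :=
  antitoneOn_of_hasDerivWithinAt_nonpos hs (fun x hx => (hf x hx).continuousAt.continuousWithinAt)
    (fun x hx => (hf x (interior_subset hx)).hasDerivWithinAt)
    fun x hx => hf' x (interior_subset hx)

section Mixture

variable {ι : Type*} [Fintype ι] [LinearOrder ι] {w : ι → ℝ} {D D' r : ι → ℝ → ℝ}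
  {D'' r' : ι → ℝ} {t : ℝ}

theorem hasDerivAt_mixture_rate (hD : ∀ i, HasDerivAt (D i) (D' i t) t)
    (hD' : ∀ i, HasDerivAt (D' i) (D'' i) t) (hDt : ∀ i, D i t ≠ 0)
    (hS : ∑ i, w i * D i t ≠ 0) (hr : ∀ i, r i = fun s => -D' i s / D i s)
    (hr' : ∀ i, HasDerivAt (r i) (r' i) t) :
    HasDerivAt (fun s => -(∑ i, w i * D' i s) / ∑ i, w i * D i s)
      (∑ i, w i * D i t / (∑ j, w j * D j t) * r' i
        - (∑ i, ∑ j, if i < j then w i * w j * D i t * D j t * (r i t - r j t) ^ 2 else 0)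
          / (∑ j, w j * D j t) ^ 2) t := by
  have hD't : ∀ i, w i * D' i t = -(w i * D i t * r i t) := fun i => by
    have := hDt i
    rw [hr]
    field_simp
  have hD''t : ∀ i, w i * D'' i = w i * D i t * (r i t ^ 2 - r' i) := fun i => by
    rw [eq_sq_sub_deriv_mul_of_hasDerivAt_neg_div (hD i) (hD' i) (hDt i) (hr i) (hr' i)]
    ring
  convert hasDerivAt_neg_div (HasDerivAt.fun_sum fun i _ => (hD i).const_mul (w i))
    (HasDerivAt.fun_sum fun i _ => (hD' i).const_mul (w i)) hS using 1
  simp only [hD't, hD''t, sum_neg_distrib, neg_sq]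
  rw [mixture_rate_deriv_eq _ _ _ hS]
  congr 2
  exact sum_congr rfl fun i _ => sum_congr rfl fun j _ => by split_ifs <;> ring

theorem mixture_rate_deriv_nonpos (hw : ∀ i, 0 ≤ w i) (hDt : ∀ i, 0 ≤ D i t)
    (hr' : ∀ i, r' i ≤ 0) :
    ∑ i, w i * D i t / (∑ j, w j * D j t) * r' i
      - (∑ i, ∑ j, if i < j then w i * w j * D i t * D j t * (r i t - r j t) ^ 2 else 0)
        / (∑ j, w j * D j t) ^ 2 ≤ 0 := by
  have hS : 0 ≤ ∑ j, w j * D j t := sum_nonneg fun j _ => mul_nonneg (hw j) (hDt j)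
  have hterm : ∀ i, w i * D i t / (∑ j, w j * D j t) * r' i ≤ 0 := fun i =>
    mul_nonpos_of_nonneg_of_nonpos (div_nonneg (mul_nonneg (hw i) (hDt i)) hS) (hr' i)
  have hpair : ∀ i j, 0 ≤ if i < j then
      w i * w j * D i t * D j t * (r i t - r j t) ^ 2 else 0 := fun i j => by
    have := hw i; have := hw j; have := hDt i; have := hDt j
    split_ifs <;> positivity
  exact sub_nonpos.2 ((sum_nonpos fun i _ => hterm i).trans
    (div_nonneg (sum_nonneg fun i _ => sum_nonneg fun j _ => hpair i j) (sq_nonneg _)))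

end Mixture

theorem mixture_DI_of_DI_general
    (n : ℕ) (D D' D'' : Fin n → ℝ → ℝ) (lam : Fin n → ℝ)
    (hlam : ∀ i, 0 < lam i) (hsum : ∑ i, lam i = 1)
    (hD : ∀ i t, HasDerivAt (D i) (D' i t) t)
    (hD' : ∀ i t, HasDerivAt (D' i) (D'' i t) t)
    (hpos : ∀ i, ∀ t ∈ Ici (0:ℝ), 0 < D i t)
    (r : Fin n → ℝ → ℝ) (hr : ∀ i t, r i t = -(D' i t) / D i t)
    (r' : Fin n → ℝ → ℝ) (hrd : ∀ i t, HasDerivAt (r i) (r' i t) t)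
    (hranti : ∀ i, ∀ t ∈ Ici (0:ℝ), r' i t ≤ 0) :
    AntitoneOn (fun t => -(∑ i, lam i * D' i t) / (∑ i, lam i * D i t)) (Ici 0) ∧
    ∀ t ∈ Ici (0:ℝ),
      HasDerivAt (fun s => -(∑ i, lam i * D' i s) / (∑ i, lam i * D i s))
        ((∑ i, (lam i * D i t / (∑ j, lam j * D j t)) * r' i t) -
          (∑ i, ∑ j, if i < j then
              lam i * lam j * D i t * D j t * (r i t - r j t) ^ 2 else 0) /
            (∑ j, lam j * D j t) ^ 2) t := by
  have : Nonempty (Fin n) := by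
    by_contra h
    simp [not_nonempty_iff.mp h] at hsum
  have hS : ∀ t ∈ Ici (0:ℝ), 0 < ∑ i, lam i * D i t := fun t ht =>
    sum_pos (fun i _ => mul_pos (hlam i) (hpos i t ht)) univ_nonempty
  have hderiv := fun t (ht : t ∈ Ici (0:ℝ)) =>
    hasDerivAt_mixture_rate (D'' := fun i => D'' i t) (r' := fun i => r' i t) (fun i => hD i t)
      (fun i => hD' i t) (fun i => (hpos i t ht).ne') (hS t ht).ne' (fun i => funext (hr i))
      (fun i => hrd i t)
  exact ⟨antitoneOn_of_hasDerivAt_nonpos (convex_Ici 0) hderiv fun t ht =>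
    mixture_rate_deriv_nonpos (fun i => (hlam i).le) (fun i => (hpos i t ht).le)
      (fun i => hranti i t ht), hderiv⟩

/-- The mixture of DI discount functions is DI: if each `rᵢ = -Dᵢ'/Dᵢ` is non-increasing,
then the rate `r = -D'/D` of the mixture `D = Σ λᵢ Dᵢ` is non-increasing; moreover
`r' = Σᵢ (λᵢDᵢ/D) rᵢ' - (Σ_{i<j} λᵢλⱼDᵢDⱼ(rᵢ-rⱼ)²)/D²`. -/
theorem mixture_DI_of_DI
    (n : ℕ) (D D' D'' : Fin n → ℝ → ℝ) (lam : Fin n → ℝ)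
    (hlam : ∀ i, 0 < lam i) (hsum : ∑ i, lam i = 1)
    (hD : ∀ i t, HasDerivAt (D i) (D' i t) t)
    (hD' : ∀ i t, HasDerivAt (D' i) (D'' i t) t)
    (hD''cont : ∀ i, Continuous (D'' i))
    (hpos : ∀ i, ∀ t ∈ Ici (0:ℝ), 0 < D i t)
    (hle : ∀ i, ∀ t ∈ Ici (0:ℝ), D i t ≤ 1)
    (hneg : ∀ i, ∀ t ∈ Ici (0:ℝ), D' i t < 0)
    (r : Fin n → ℝ → ℝ) (hr : ∀ i t, r i t = -(D' i t) / D i t)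
    (r' : Fin n → ℝ → ℝ) (hrd : ∀ i t, HasDerivAt (r i) (r' i t) t)
    (hranti : ∀ i, ∀ t ∈ Ici (0:ℝ), r' i t ≤ 0) :
    AntitoneOn (fun t => -(∑ i, lam i * D' i t) / (∑ i, lam i * D i t)) (Ici 0) ∧
    ∀ t ∈ Ici (0:ℝ),
      HasDerivAt (fun s => -(∑ i, lam i * D' i s) / (∑ i, lam i * D i s))
        ((∑ i, (lam i * D i t / (∑ j, lam j * D j t)) * r' i t) -
          (∑ i, ∑ j, if i < j then
              lam i * lam j * D i t * D j t * (r i t - r j t) ^ 2 else 0) /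
            (∑ j, lam j * D j t) ^ 2) t :=
  mixture_DI_of_DI_general n D D' D'' lam hlam hsum hD hD' hpos r hr r' hrd hranti
end

section
/- If D₁, ..., Dₙ are distinct exponential discount functions D_i(t) = δ_i^t with δ_i ∈ (0,1) pairwise distinct, and λ_i > 0 with Σ λ_i = 1, then the mixture D(t) = Σ λ_i δ_i^t is strictly log-convex on [0,∞). -/
open Real Set

private lemma amgm_strict {x y a b : ℝ} (hx : 0 < x) (hy : 0 < y) (hxy : x ≠ y)
    (ha : 0 < a) (hb : 0 < b) (hab : a + b = 1) :
    x ^ a * y ^ b < a * x + b * y := by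
  have h := strictConcaveOn_log_Ioi.2 (mem_Ioi.2 hx) (mem_Ioi.2 hy) hxy ha hb hab
  simp only [smul_eq_mul] at h
  have h1 : x ^ a * y ^ b = Real.exp (a * Real.log x + b * Real.log y) := by
    rw [Real.exp_add, Real.rpow_def_of_pos hx, Real.rpow_def_of_pos hy, mul_comm a, mul_comm b]
  have h2 : (0:ℝ) < a * x + b * y := by positivity
  rw [h1, ← Real.exp_log h2]
  exact Real.exp_lt_exp.2 h

private lemma amgm_le {x y a b : ℝ} (hx : 0 < x) (hy : 0 < y)
    (ha : 0 < a) (hb : 0 < b) (hab : a + b = 1) :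
    x ^ a * y ^ b ≤ a * x + b * y := by
  rcases eq_or_ne x y with rfl | h
  · rw [← Real.rpow_add hx, hab, Real.rpow_one]; nlinarith
  · exact (amgm_strict hx hy h ha hb hab).le

private lemma exp_cancel {c x y : ℝ} (hc : 0 < c) (hc1 : c ≠ 1)
    (h : c ^ x = c ^ y) : x = y := by
  rw [Real.rpow_def_of_pos hc, Real.rpow_def_of_pos hc] at h
  have h2 := Real.exp_injective h
  have hlog : Real.log c ≠ 0 := by
    intro h0
    rcases Real.log_eq_zero.1 h0 with h' | h' | h'
    · exact absurd h' hc.ne'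
    · exact hc1 h'
    · linarith
  exact mul_left_cancel₀ hlog h2

/-- A mixture of pairwise distinct exponential discount functions `δᵢ^t` is strictly
log-convex on `[0,∞)`. -/
theorem mixture_exponentials_strictly_logConvex
    (n : ℕ) (hn : 2 ≤ n) (δ : Fin n → ℝ)
    (hδ0 : ∀ i, 0 < δ i) (hδ1 : ∀ i, δ i < 1)
    (hdist : Function.Injective δ)
    (lam : Fin n → ℝ) (hlam : ∀ i, 0 < lam i) (hsum : ∑ i, lam i = 1) :
    (∀ t ∈ Ici (0:ℝ), 0 < ∑ i, lam i * Real.rpow (δ i) t) ∧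
    StrictConvexOn ℝ (Ici 0) (fun t => Real.log (∑ i, lam i * Real.rpow (δ i) t)) := by
  have hpos : ∀ t : ℝ, 0 < ∑ i, lam i * (δ i) ^ t := by
    intro t
    refine Finset.sum_pos (fun i _ => mul_pos (hlam i) (Real.rpow_pos_of_pos (hδ0 i) t))
      ⟨⟨0, by omega⟩, Finset.mem_univ _⟩
  refine ⟨fun t _ => hpos t, convex_Ici 0, ?_⟩
  intro x hx y hy hxy a b ha hb hab
  show Real.log (∑ i, lam i * (δ i) ^ (a • x + b • y))
      < a • Real.log (∑ i, lam i * (δ i) ^ x) + b • Real.log (∑ i, lam i * (δ i) ^ y)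
  simp only [smul_eq_mul]
  set S := ∑ i, lam i * (δ i) ^ x with hS
  set T := ∑ i, lam i * (δ i) ^ y with hT
  have hSpos : 0 < S := hpos x
  have hTpos : 0 < T := hpos y
  have key : (∑ i, lam i * (δ i) ^ (a * x + b * y)) < S ^ a * T ^ b := by
    have expand : ∀ i : Fin n, lam i * (δ i) ^ (a * x + b * y)
        = S ^ a * T ^ b * (lam i * (((δ i) ^ x / S) ^ a * ((δ i) ^ y / T) ^ b)) := by
      intro i
      have hδi := hδ0 i
      have hux : (0:ℝ) < (δ i) ^ x := Real.rpow_pos_of_pos hδi x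
      have huy : (0:ℝ) < (δ i) ^ y := Real.rpow_pos_of_pos hδi y
      have h1 : (δ i) ^ (a * x + b * y) = ((δ i) ^ x) ^ a * ((δ i) ^ y) ^ b := by
        rw [Real.rpow_add hδi, mul_comm a x, mul_comm b y,
          Real.rpow_mul hδi.le, Real.rpow_mul hδi.le]
      rw [h1, Real.div_rpow hux.le hSpos.le, Real.div_rpow huy.le hTpos.le]
      have hSa : (0:ℝ) < S ^ a := Real.rpow_pos_of_pos hSpos a
      have hTb : (0:ℝ) < T ^ b := Real.rpow_pos_of_pos hTpos b
      field_simp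
    rw [Finset.sum_congr rfl (fun i _ => expand i), ← Finset.mul_sum]
    have hsum_lt : (∑ i, lam i * (((δ i) ^ x / S) ^ a * ((δ i) ^ y / T) ^ b)) < 1 := by
      have hex : ∃ j : Fin n, (δ j) ^ x / S ≠ (δ j) ^ y / T := by
        by_contra hcon
        push_neg at hcon
        set c0 : ℝ := δ ⟨0, by omega⟩ with hc0def
        set c1 : ℝ := δ ⟨1, by omega⟩ with hc1def
        have h0 := hcon ⟨0, by omega⟩
        have h1 := hcon ⟨1, by omega⟩
        rw [← hc0def] at h0
        rw [← hc1def] at h1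
        have hc0 : 0 < c0 := hδ0 _
        have hc1 : 0 < c1 := hδ0 _
        have hne : c0 ≠ c1 := fun h => by
          have := hdist h; simp [Fin.ext_iff] at this
        have h0x : (0:ℝ) < c0 ^ x := Real.rpow_pos_of_pos hc0 x
        have h0y : (0:ℝ) < c0 ^ y := Real.rpow_pos_of_pos hc0 y
        have h1x : (0:ℝ) < c1 ^ x := Real.rpow_pos_of_pos hc1 x
        have h1y : (0:ℝ) < c1 ^ y := Real.rpow_pos_of_pos hc1 y
        have e0 : c0 ^ x * T = c0 ^ y * S := by
          rw [div_eq_div_iff hSpos.ne' hTpos.ne'] at h0; linarith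
        have e1 : c1 ^ x * T = c1 ^ y * S := by
          rw [div_eq_div_iff hSpos.ne' hTpos.ne'] at h1; linarith
        have hcross : c0 ^ x * c1 ^ y = c1 ^ x * c0 ^ y := by
          nlinarith [mul_pos h0y h1y]
        have hratio : (c0 / c1) ^ x = (c0 / c1) ^ y := by
          rw [Real.div_rpow hc0.le hc1.le, Real.div_rpow hc0.le hc1.le,
            div_eq_div_iff h1x.ne' h1y.ne']
          linarith
        have hbase1 : c0 / c1 ≠ 1 := by
          intro h
          exact hne (by field_simp at h; linarith)
        exact hxy (exp_cancel (by positivity) hbase1 hratio)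
      obtain ⟨j, hj⟩ := hex
      have upos : ∀ i : Fin n, (0:ℝ) < (δ i) ^ x / S :=
        fun i => div_pos (Real.rpow_pos_of_pos (hδ0 i) x) hSpos
      have vpos : ∀ i : Fin n, (0:ℝ) < (δ i) ^ y / T :=
        fun i => div_pos (Real.rpow_pos_of_pos (hδ0 i) y) hTpos
      have hle : ∀ i ∈ Finset.univ, lam i * (((δ i) ^ x / S) ^ a * ((δ i) ^ y / T) ^ b)
          ≤ lam i * (a * ((δ i) ^ x / S) + b * ((δ i) ^ y / T)) := fun i _ =>
        mul_le_mul_of_nonneg_left (amgm_le (upos i) (vpos i) ha hb hab) (hlam i).le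
      have hlt : lam j * (((δ j) ^ x / S) ^ a * ((δ j) ^ y / T) ^ b)
          < lam j * (a * ((δ j) ^ x / S) + b * ((δ j) ^ y / T)) :=
        mul_lt_mul_of_pos_left (amgm_strict (upos j) (vpos j) hj ha hb hab) (hlam j)
      calc (∑ i, lam i * (((δ i) ^ x / S) ^ a * ((δ i) ^ y / T) ^ b))
          < ∑ i, lam i * (a * ((δ i) ^ x / S) + b * ((δ i) ^ y / T)) :=
            Finset.sum_lt_sum hle ⟨j, Finset.mem_univ j, hlt⟩
        _ = a / S * (∑ i, lam i * (δ i) ^ x) + b / T * (∑ i, lam i * (δ i) ^ y) := by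
            rw [Finset.mul_sum, Finset.mul_sum, ← Finset.sum_add_distrib]
            refine Finset.sum_congr rfl fun i _ => ?_
            field_simp
        _ = 1 := by
            rw [← hS, ← hT, div_mul_cancel₀ a hSpos.ne', div_mul_cancel₀ b hTpos.ne', hab]
    have hprodpos : (0:ℝ) < S ^ a * T ^ b :=
      mul_pos (Real.rpow_pos_of_pos hSpos a) (Real.rpow_pos_of_pos hTpos b)
    calc S ^ a * T ^ b * (∑ i, lam i * (((δ i) ^ x / S) ^ a * ((δ i) ^ y / T) ^ b))
        < S ^ a * T ^ b * 1 := mul_lt_mul_of_pos_left hsum_lt hprodpos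
      _ = S ^ a * T ^ b := mul_one _
  calc Real.log (∑ i, lam i * (δ i) ^ (a * x + b * y))
      < Real.log (S ^ a * T ^ b) := Real.log_lt_log (hpos (a * x + b * y)) key
    _ = a * Real.log S + b * Real.log T := by
        rw [Real.log_mul (Real.rpow_pos_of_pos hSpos a).ne' (Real.rpow_pos_of_pos hTpos b).ne',
          Real.log_rpow hSpos, Real.log_rpow hTpos]
end

section
/- Let D₁, ..., Dₙ : [0,∞) → (0,1] be twice continuously differentiable discount functions with D_i' < 0, and let D = Σ λ_i D_i with λ_i > 0, Σ λ_i = 1. Define r_i = -D_i'/D_i, I_i = -D_i''/D_i' + D_i'/D_i, and I = -D''/D' + D'/D. Then I(t) ≥ min_i I_i(t) for all t ≥ 0, with strict inequality at any t where r_j(t) ≠ r_k(t) for some j ≠ k. -/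
open Real Set

/-- The index of DI of a mixture is at least the minimum of the component indices, with
strict inequality wherever two components have different time preference rates. -/
theorem mixture_index_ge_min_index
    (n : ℕ) (hn : 0 < n) (D D' D'' : Fin n → ℝ → ℝ) (lam : Fin n → ℝ)
    (hlam : ∀ i, 0 < lam i) (hsum : ∑ i, lam i = 1)
    (hD : ∀ i t, HasDerivAt (D i) (D' i t) t)
    (hD' : ∀ i t, HasDerivAt (D' i) (D'' i t) t)
    (hD''cont : ∀ i, Continuous (D'' i))
    (hpos : ∀ i, ∀ t ∈ Ici (0:ℝ), 0 < D i t)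
    (hle : ∀ i, ∀ t ∈ Ici (0:ℝ), D i t ≤ 1)
    (hneg : ∀ i, ∀ t ∈ Ici (0:ℝ), D' i t < 0)
    (r : Fin n → ℝ → ℝ) (hr : ∀ i t, r i t = -(D' i t) / D i t)
    (Idx : Fin n → ℝ → ℝ)
    (hIdx : ∀ i t, Idx i t = -(D'' i t) / D' i t + D' i t / D i t)
    (I : ℝ → ℝ)
    (hI : ∀ t, I t = -(∑ i, lam i * D'' i t) / (∑ i, lam i * D' i t) +
      (∑ i, lam i * D' i t) / (∑ i, lam i * D i t)) :
    ∀ t ∈ Ici (0:ℝ),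
      (Finset.univ.inf' (Finset.univ_nonempty_iff.mpr (Fin.pos_iff_nonempty.mp hn))
          (fun i => Idx i t)) ≤ I t ∧
      ((∃ j k, j ≠ k ∧ r j t ≠ r k t) →
        (Finset.univ.inf' (Finset.univ_nonempty_iff.mpr (Fin.pos_iff_nonempty.mp hn))
          (fun i => Idx i t)) < I t) := by
  intro t ht
  have hDpos : ∀ i, 0 < D i t := fun i => hpos i t ht
  have hDneg : ∀ i, D' i t < 0 := fun i => hneg i t ht
  set a : Fin n → ℝ := fun i => lam i * D i t with ha
  have hapos : ∀ i, 0 < a i := fun i => mul_pos (hlam i) (hDpos i)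
  have hrpos : ∀ i, 0 < r i t := by
    intro i
    rw [hr]
    exact div_pos (neg_pos.mpr (hDneg i)) (hDpos i)
  set S : ℝ := ∑ i, a i with hSdef
  set T : ℝ := ∑ i, a i * r i t with hTdef
  set U : ℝ := ∑ i, a i * r i t * Idx i t with hUdef
  set Q : ℝ := ∑ i, a i * (r i t)^2 with hQdef
  have hne : Nonempty (Fin n) := Fin.pos_iff_nonempty.mp hn
  have huniv : (Finset.univ : Finset (Fin n)).Nonempty := Finset.univ_nonempty_iff.mpr hne
  have hS : 0 < S := Finset.sum_pos (fun i _ => hapos i) huniv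
  have hT : 0 < T := Finset.sum_pos (fun i _ => mul_pos (hapos i) (hrpos i)) huniv
  -- rewrite the sums appearing in I
  have h2 : (∑ i, lam i * D' i t) = -T := by
    rw [hTdef, ← Finset.sum_neg_distrib]
    refine Finset.sum_congr rfl fun i _ => ?_
    rw [hr, ha]
    field_simp [(hDpos i).ne']
  have h3 : (∑ i, lam i * D'' i t) = U + Q := by
    rw [hUdef, hQdef, ← Finset.sum_add_distrib]
    refine Finset.sum_congr rfl fun i _ => ?_
    rw [hr, hIdx, ha]
    field_simp [(hDpos i).ne', (hDneg i).ne]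
    ring
  have h1 : (∑ i, lam i * D i t) = S := rfl
  have hIt : I t = U/T + (Q/T - T/S) := by
    rw [hI, h2, h3, h1]
    field_simp [hT.ne', hS.ne']
    ring
  -- Cauchy-Schwarz part
  set c : ℝ := T / S with hcdef
  set E : ℝ := ∑ i, a i * (r i t - c)^2 with hEdef
  have hEnn : 0 ≤ E := Finset.sum_nonneg fun i _ => mul_nonneg (hapos i).le (sq_nonneg _)
  have hEexp : E = Q - 2*c*T + c^2*S := by
    have h : E = ∑ i, (a i * (r i t)^2 - 2*c*(a i * r i t) + c^2 * a i) :=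
      Finset.sum_congr rfl fun i _ => by ring
    rw [h, Finset.sum_add_distrib, Finset.sum_sub_distrib, ← Finset.mul_sum, ← Finset.mul_sum]
  have hES : Q * S - T^2 = E * S := by
    rw [hEexp, hcdef]
    field_simp
    ring
  have h5 : Q/T - T/S = E/T := by
    rw [div_sub_div _ _ hT.ne' hS.ne', div_eq_div_iff (mul_pos hT hS).ne' hT.ne']
    nlinarith [hES]
  set m : ℝ := Finset.univ.inf' (Finset.univ_nonempty_iff.mpr (Fin.pos_iff_nonempty.mp hn))
      (fun i => Idx i t) with hmdef
  have hm : ∀ i, m ≤ Idx i t := fun i => Finset.inf'_le _ (Finset.mem_univ i)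
  have hU : m * T ≤ U := by
    rw [hTdef, Finset.mul_sum, hUdef]
    refine Finset.sum_le_sum fun i _ => ?_
    have := mul_le_mul_of_nonneg_left (hm i) (mul_pos (hapos i) (hrpos i)).le
    linarith
  have hUT : m ≤ U / T := (le_div_iff₀ hT).mpr hU
  constructor
  · rw [hIt, h5]
    have : (0:ℝ) ≤ E / T := div_nonneg hEnn hT.le
    linarith
  · rintro ⟨j, k, hjk, hrjk⟩
    have hjc : r j t ≠ c ∨ r k t ≠ c := by
      by_contra h
      push_neg at h
      exact hrjk (h.1.trans h.2.symm)
    have hEpos : 0 < E := by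
      rw [hEdef]
      rcases hjc with h | h
      · exact Finset.sum_pos' (fun i _ => mul_nonneg (hapos i).le (sq_nonneg _))
          ⟨j, Finset.mem_univ j, mul_pos (hapos j) (by exact pow_pos (abs_pos.mpr (sub_ne_zero.mpr h)) 2 |>.trans_eq (sq_abs _)) ⟩
      · exact Finset.sum_pos' (fun i _ => mul_nonneg (hapos i).le (sq_nonneg _))
          ⟨k, Finset.mem_univ k, mul_pos (hapos k) (by exact pow_pos (abs_pos.mpr (sub_ne_zero.mpr h)) 2 |>.trans_eq (sq_abs _)) ⟩
    rw [hIt, h5]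
    have : (0:ℝ) < E / T := div_pos hEpos hT
    linarith
end

section
/- Let D_i(t) = 1/(1 + h_i t) for i = 1,...,n with pairwise distinct h_i > 0, and probabilities p_i > 0 with Σ p_i = 1. Define the certainty-equivalent hyperbolic rate h(t) = (1/D(t) - 1)/t for t > 0, where D = Σ p_i D_i. Then h(t) → H as t → ∞, where H = (Σ p_i / h_i)^{-1} is the probability-weighted harmonic mean of h₁,...,hₙ. -/
open Real Filter

/-! Since `(1 / D - 1) / t = (t * D)⁻¹ - t⁻¹`, it suffices that `t * D t → ∑ pᵢ / hᵢ`, which holds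
termwise because `t / (1 + hᵢ t) → 1 / hᵢ`. -/

theorem tendsto_div_one_add_mul_atTop {c : ℝ} (hc : c ≠ 0) :
    Tendsto (fun t : ℝ => t / (1 + c * t)) atTop (nhds c⁻¹) := by
  have hlim : Tendsto (fun t : ℝ => (t⁻¹ + c)⁻¹) atTop (nhds c⁻¹) := by
    simpa using (tendsto_inv_atTop_zero.add_const c).inv₀ (by rwa [zero_add])
  refine hlim.congr' ?_
  filter_upwards [eventually_ne_atTop 0] with t ht
  field_simp

theorem tendsto_mul_sum_div_one_add_mul_atTop {ι : Type*} (s : Finset ι) (p c : ι → ℝ)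
    (hc : ∀ i ∈ s, c i ≠ 0) :
    Tendsto (fun t : ℝ => t * ∑ i ∈ s, p i / (1 + c i * t)) atTop
      (nhds (∑ i ∈ s, p i / c i)) := by
  simp_rw [Finset.mul_sum, mul_div_left_comm _ (p _), div_eq_mul_inv (p _) (c _)]
  exact tendsto_finsetSum s fun i hi => (tendsto_div_one_add_mul_atTop (hc i hi)).const_mul (p i)

theorem tendsto_one_div_sub_one_div_atTop {f : ℝ → ℝ} {S : ℝ} (hS : S ≠ 0)
    (hf : Tendsto (fun t => t * f t) atTop (nhds S)) :
    Tendsto (fun t => (1 / f t - 1) / t) atTop (nhds S⁻¹) := by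
  have hrewrite : ∀ t, (1 / f t - 1) / t = (t * f t)⁻¹ - t⁻¹ := fun t => by
    rw [mul_inv]; ring
  simpa only [hrewrite, sub_zero] using (hf.inv₀ hS).sub tendsto_inv_atTop_zero

theorem certainty_equivalent_rate_tendsto_harmonic_mean_general
    (n : ℕ) (h p : Fin n → ℝ)
    (hh : ∀ i, 0 < h i)
    (hp : ∀ i, 0 < p i) (hsum : ∑ i, p i = 1)
    (D : ℝ → ℝ) (hD : ∀ t, D t = ∑ i, p i / (1 + h i * t))
    (hrate : ℝ → ℝ) (hhrate : ∀ t, 0 < t → hrate t = (1 / D t - 1) / t) :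
    Tendsto hrate atTop (nhds ((∑ i, p i / h i)⁻¹)) := by
  have hne : (Finset.univ : Finset (Fin n)).Nonempty :=
    Finset.nonempty_of_sum_ne_zero (by rw [hsum]; exact one_ne_zero)
  have hS : 0 < ∑ i, p i / h i := Finset.sum_pos (fun i _ => div_pos (hp i) (hh i)) hne
  have hmul : Tendsto (fun t => t * D t) atTop (nhds (∑ i, p i / h i)) := by
    simpa only [hD] using
      tendsto_mul_sum_div_one_add_mul_atTop Finset.univ p h fun i _ => (hh i).ne'
  refine (tendsto_one_div_sub_one_div_atTop hS.ne' hmul).congr' ?_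
  filter_upwards [eventually_gt_atTop 0] with t ht
  exact (hhrate t ht).symm

/-- The certainty-equivalent hyperbolic discount rate of a mixture of proportional
hyperbolic discount functions converges to the probability-weighted harmonic mean of
the individual hyperbolic rates. -/
theorem certainty_equivalent_rate_tendsto_harmonic_mean
    (n : ℕ) (h p : Fin n → ℝ)
    (hh : ∀ i, 0 < h i) (hdist : Function.Injective h)
    (hp : ∀ i, 0 < p i) (hsum : ∑ i, p i = 1)
    (D : ℝ → ℝ) (hD : ∀ t, D t = ∑ i, p i / (1 + h i * t))
    (hrate : ℝ → ℝ) (hhrate : ∀ t, 0 < t → hrate t = (1 / D t - 1) / t) :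
    Tendsto hrate atTop (nhds ((∑ i, p i / h i)⁻¹)) :=
  certainty_equivalent_rate_tendsto_harmonic_mean_general n h p hh hp hsum D hD hrate hhrate
end

section
/- Let h₁ ≠ h₂ be positive reals and p₁, p₂ > 0 with p₁ + p₂ = 1. Define h(t) = (1/(p₁(1+h₁t)^{-1} + p₂(1+h₂t)^{-1}) - 1)/t for t > 0. Then h(t) = (p₁h₁ + p₂h₂ + h₁h₂t)/(1 + (p₁h₂ + p₂h₁)t), and h is strictly decreasing on (0,∞). -/
open Set

/-- For two proportional hyperbolic discount functions, the certainty-equivalent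
hyperbolic rate equals `(p₁h₁ + p₂h₂ + h₁h₂t)/(1 + (p₁h₂ + p₂h₁)t)` and is strictly
decreasing on `(0,∞)`. -/
theorem two_hyperbolic_certainty_equivalent_rate
    (h₁ h₂ p₁ p₂ : ℝ) (hh₁ : 0 < h₁) (hh₂ : 0 < h₂) (hne : h₁ ≠ h₂)
    (hp₁ : 0 < p₁) (hp₂ : 0 < p₂) (hpsum : p₁ + p₂ = 1)
    (h : ℝ → ℝ)
    (hdef : ∀ t, 0 < t →
      h t = (1 / (p₁ * (1 + h₁ * t)⁻¹ + p₂ * (1 + h₂ * t)⁻¹) - 1) / t) :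
    (∀ t, 0 < t →
      h t = (p₁ * h₁ + p₂ * h₂ + h₁ * h₂ * t) / (1 + (p₁ * h₂ + p₂ * h₁) * t)) ∧
    StrictAntiOn h (Ioi 0) := by
  have key : ∀ t, 0 < t →
      h t = (p₁ * h₁ + p₂ * h₂ + h₁ * h₂ * t) / (1 + (p₁ * h₂ + p₂ * h₁) * t) := by
    intro t ht
    have h1t : (0:ℝ) < 1 + h₁ * t := by positivity
    have h2t : (0:ℝ) < 1 + h₂ * t := by positivity
    have hD : (0:ℝ) < p₁ * (1 + h₁ * t)⁻¹ + p₂ * (1 + h₂ * t)⁻¹ := by positivity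
    have hB : (0:ℝ) < 1 + (p₁ * h₂ + p₂ * h₁) * t := by positivity
    rw [hdef t ht]
    have hp2 : p₂ = 1 - p₁ := by linarith
    subst hp2
    field_simp
    ring
  refine ⟨key, ?_⟩
  intro s hs t ht hst
  simp only [mem_Ioi] at hs ht
  rw [key s hs, key t ht]
  have hp2 : p₂ = 1 - p₁ := by linarith
  have hBs : (0:ℝ) < 1 + (p₁ * h₂ + p₂ * h₁) * s := by positivity
  have hBt : (0:ℝ) < 1 + (p₁ * h₂ + p₂ * h₁) * t := by positivity
  rw [div_lt_div_iff₀ hBt hBs]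
  have hsq : 0 < p₁ * p₂ * (h₁ - h₂)^2 := by
    have : h₁ - h₂ ≠ 0 := sub_ne_zero.mpr hne
    positivity
  subst hp2
  nlinarith [mul_pos (sub_pos.mpr hst) hsq]
end

section
/- Let D : [0,∞) → (0,1] be a discount function (continuous, strictly decreasing, D(0)=1, D(t) → 0) and let u : X → ℝ be continuous and strictly increasing with u(0) = 0, on an interval X ⊆ ℝ₊ containing 0. Then the preference induced by U(x,t) = D(t)u(x) satisfies: [(x,t) ≼ (y,s) implies (x,t+σ) ≼ (y,s+σ) for all x,y ∈ X, σ > 0, 0 ≤ t < s] if and only if ln D is convex on [0,∞). -/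
/-!
The preference condition is equivalent to decreasing impatience, `D(t+σ)/D(t) ≤ D(s+σ)/D(s)` for
`t < s`: one direction applies the condition to an indifferent pair `(x,t) ~ (y,s)`, which exists
by the intermediate value theorem since `u x = (D s / D t) u y` is attainable; the other multiplies
the two inequalities. In logarithms, decreasing impatience says that `log D` has nondecreasing
increments, which for a continuous function is equivalent to convexity: nondecreasing increments
give midpoint convexity, and a continuous midpoint convex function is convex because `f - chord`
cannot have a positive maximum (at its largest maximiser midpoint convexity fails).
-/

open Real Set

theorem ConvexOn.map_add_add_le {𝕜 : Type*} [Field 𝕜] [LinearOrder 𝕜] [IsStrictOrderedRing 𝕜]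
    {s : Set 𝕜} {f : 𝕜 → 𝕜} (hf : ConvexOn 𝕜 s f) {x y d : 𝕜} (hx : x ∈ s) (hyd : y + d ∈ s)
    (hxy : x < y) (hd : 0 < d) : f (x + d) + f y ≤ f x + f (y + d) := by
  have hpos : 0 < y + d - x := by linarith
  have hw₁ : 0 ≤ d / (y + d - x) := by positivity
  have hw₂ : 0 ≤ (y - x) / (y + d - x) := div_nonneg (by linarith) hpos.le
  have hsum : d / (y + d - x) + (y - x) / (y + d - x) = 1 := by field
  have hy := hf.2 hx hyd hw₁ hw₂ hsum
  have hxd := hf.2 hx hyd hw₂ hw₁ (by rw [add_comm, hsum])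
  simp only [smul_eq_mul] at hy hxd
  rw [show d / (y + d - x) * x + (y - x) / (y + d - x) * (y + d) = y by field] at hy
  rw [show (y - x) / (y + d - x) * x + d / (y + d - x) * (y + d) = x + d by field] at hxd
  linear_combination hy + hxd + (f x + f (y + d)) * hsum

theorem nonpos_of_midpoint_le {g : ℝ → ℝ} {a b : ℝ} (hab : a ≤ b) (hg : ContinuousOn g (Icc a b))
    (ha : g a ≤ 0) (hb : g b ≤ 0)
    (hmid : ∀ x ∈ Icc a b, ∀ y ∈ Icc a b, g ((x + y) / 2) ≤ (g x + g y) / 2) :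
    ∀ x ∈ Icc a b, g x ≤ 0 := by
  obtain ⟨m, hm, hmax⟩ := isCompact_Icc.exists_isMaxOn (nonempty_Icc.2 hab) hg
  by_contra! hpos
  obtain ⟨x, hx, hgx⟩ := hpos
  have hM : 0 < g m := hgx.trans_le (hmax hx)
  -- The largest maximiser `c` is interior, and midpoint convexity around it produces a larger one.
  have hT : IsCompact (Icc a b ∩ g ⁻¹' {g m}) := isCompact_Icc.of_isClosed_subset
    (hg.preimage_isClosed_of_isClosed isClosed_Icc isClosed_singleton) inter_subset_left
  obtain ⟨c, ⟨hc, hgc⟩, hcmax⟩ := hT.exists_isGreatest ⟨m, hm, rfl⟩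
  have hgc : g c = g m := hgc
  have hac : a < c := lt_of_le_of_ne hc.1 fun h => by rw [← h] at hgc; linarith
  have hcb : c < b := lt_of_le_of_ne hc.2 fun h => by rw [h] at hgc; linarith
  set δ := min (c - a) (b - c)
  have hδ : 0 < δ := lt_min (by linarith) (by linarith)
  have hleft : c - δ ∈ Icc a b := ⟨by linarith [min_le_left (c - a) (b - c)], by linarith⟩
  have hright : c + δ ∈ Icc a b := ⟨by linarith, by linarith [min_le_right (c - a) (b - c)]⟩
  have hmidc := hmid _ hleft _ hright
  rw [show (c - δ + (c + δ)) / 2 = c by ring, hgc] at hmidc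
  have hgleft : g (c - δ) ≤ g m := hmax hleft
  have hgright : g (c + δ) = g m := le_antisymm (hmax hright) (by linarith)
  linarith [hcmax ⟨hright, hgright⟩]

theorem convexOn_of_midpoint_le {s : Set ℝ} {f : ℝ → ℝ} (hs : Convex ℝ s) (hf : ContinuousOn f s)
    (hmid : ∀ x ∈ s, ∀ y ∈ s, f ((x + y) / 2) ≤ (f x + f y) / 2) : ConvexOn ℝ s f := by
  refine ⟨hs, fun x hx y hy a b ha _ hab => ?_⟩
  have hline : ∀ μ ∈ Icc (0:ℝ) 1, μ * x + (1 - μ) * y ∈ s :=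
    fun μ hμ => hs hx hy hμ.1 (sub_nonneg.2 hμ.2) (by ring)
  set g : ℝ → ℝ := fun μ => f (μ * x + (1 - μ) * y) - (μ * f x + (1 - μ) * f y)
  have hg : ContinuousOn g (Icc 0 1) :=
    (hf.comp (by fun_prop) hline).sub (by fun_prop)
  have hgmid : ∀ μ ∈ Icc (0:ℝ) 1, ∀ ν ∈ Icc (0:ℝ) 1, g ((μ + ν) / 2) ≤ (g μ + g ν) / 2 := by
    intro μ hμ ν hν
    have h := hmid _ (hline μ hμ) _ (hline ν hν)
    rw [show (μ * x + (1 - μ) * y + (ν * x + (1 - ν) * y)) / 2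
      = (μ + ν) / 2 * x + (1 - (μ + ν) / 2) * y by ring] at h
    simp only [g]
    linarith
  have hga := nonpos_of_midpoint_le zero_le_one hg (by simp [g]) (by simp [g]) hgmid a
    ⟨ha, by linarith⟩
  obtain rfl : b = 1 - a := by linarith
  simp only [g, smul_eq_mul] at hga ⊢
  linarith

theorem convexOn_of_map_add_add_le {s : Set ℝ} {f : ℝ → ℝ} (hs : Convex ℝ s)
    (hf : ContinuousOn f s)
    (hinc : ∀ x ∈ s, ∀ y d, y + d ∈ s → x < y → 0 < d → f (x + d) + f y ≤ f x + f (y + d)) :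
    ConvexOn ℝ s f := by
  refine convexOn_of_midpoint_le hs hf fun p hp q hq => ?_
  rcases lt_trichotomy p q with hpq | rfl | hpq
  · have h := hinc p hp ((p + q) / 2) ((q - p) / 2) (by convert hq using 1; ring)
      (by linarith) (by linarith)
    rw [show p + (q - p) / 2 = (p + q) / 2 by ring, show (p + q) / 2 + (q - p) / 2 = q by ring] at h
    linarith
  · simp
  · have h := hinc q hq ((p + q) / 2) ((p - q) / 2) (by convert hp using 1; ring)
      (by linarith) (by linarith)
    rw [show q + (p - q) / 2 = (p + q) / 2 by ring, show (p + q) / 2 + (p - q) / 2 = p by ring] at h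
    linarith

theorem mul_le_mul_iff_log_add_log_le {a b c d : ℝ} (ha : 0 < a) (hb : 0 < b) (hc : 0 < c)
    (hd : 0 < d) : a * b ≤ c * d ↔ log a + log b ≤ log c + log d := by
  rw [← log_mul ha.ne' hb.ne', ← log_mul hc.ne' hd.ne', log_le_log_iff (by positivity)
    (by positivity)]

/-- The preference `(x,t) ≼ (y,s) ↔ D t * u x ≤ D s * u y` between a sooner and a later reward
survives delaying both by the same `σ`. -/
def PresentBiased (X : Set ℝ) (u D : ℝ → ℝ) : Prop :=
  ∀ x ∈ X, ∀ y ∈ X, ∀ σ : ℝ, 0 < σ → ∀ t s : ℝ, 0 ≤ t → t < s →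
    D t * u x ≤ D s * u y → D (t + σ) * u x ≤ D (s + σ) * u y

/-- `D (t + σ) / D t ≤ D (s + σ) / D s` for `t < s`, written without division. -/
def DecreasingImpatience (D : ℝ → ℝ) : Prop :=
  ∀ t s σ : ℝ, 0 ≤ t → t < s → 0 < σ → D (t + σ) * D s ≤ D t * D (s + σ)

theorem decreasingImpatience_iff_convexOn_log {D : ℝ → ℝ} (hDcont : ContinuousOn D (Ici 0))
    (hDpos : ∀ t ∈ Ici (0:ℝ), 0 < D t) :
    DecreasingImpatience D ↔ ConvexOn ℝ (Ici 0) (fun t => log (D t)) := by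
  have hpos : ∀ t s σ : ℝ, 0 ≤ t → t < s → 0 < σ →
      0 < D (t + σ) ∧ 0 < D s ∧ 0 < D t ∧ 0 < D (s + σ) := fun t s σ ht hts hσ =>
    ⟨hDpos _ (by simp only [mem_Ici]; linarith), hDpos _ (by simp only [mem_Ici]; linarith),
      hDpos _ ht, hDpos _ (by simp only [mem_Ici]; linarith)⟩
  constructor
  · intro h
    refine convexOn_of_map_add_add_le (convex_Ici 0)
      (continuousOn_log.comp hDcont fun t ht => (hDpos t ht).ne') fun t ht s σ _ hts hσ => ?_
    obtain ⟨h₁, h₂, h₃, h₄⟩ := hpos t s σ ht hts hσ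
    exact (mul_le_mul_iff_log_add_log_le h₁ h₂ h₃ h₄).1 (h t s σ ht hts hσ)
  · intro h t s σ ht hts hσ
    obtain ⟨h₁, h₂, h₃, h₄⟩ := hpos t s σ ht hts hσ
    exact (mul_le_mul_iff_log_add_log_le h₁ h₂ h₃ h₄).2
      (h.map_add_add_le ht (by simp only [mem_Ici]; linarith) hts hσ)

theorem ContinuousOn.exists_mem_eq_mul {X : Set ℝ} {u : ℝ → ℝ} (hX : X.OrdConnected)
    (hu : ContinuousOn u X) (hX0 : 0 ∈ X) (hu0 : u 0 = 0) {y : ℝ} (hy : y ∈ X) (hy0 : 0 ≤ y)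
    (huy : 0 ≤ u y) {r : ℝ} (hr : r ∈ Icc (0:ℝ) 1) : ∃ x ∈ X, u x = r * u y := by
  have hval : r * u y ∈ Icc (u 0) (u y) :=
    ⟨hu0.symm ▸ mul_nonneg hr.1 huy, mul_le_of_le_one_left huy hr.2⟩
  obtain ⟨x, hx, hux⟩ := intermediate_value_Icc hy0 (hu.mono (hX.out hX0 hy)) hval
  exact ⟨x, hX.out hX0 hy hx, hux⟩

theorem PresentBiased.decreasingImpatience {X : Set ℝ} {u D : ℝ → ℝ} (hX : X.OrdConnected)
    (hX0 : 0 ∈ X) (hXpos : ∃ x ∈ X, 0 < x) (hucont : ContinuousOn u X)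
    (humono : StrictMonoOn u X) (hu0 : u 0 = 0) (hDanti : StrictAntiOn D (Ici 0))
    (hDpos : ∀ t ∈ Ici (0:ℝ), 0 < D t) (h : PresentBiased X u D) : DecreasingImpatience D := by
  intro t s σ ht hts hσ
  obtain ⟨y, hy, hy0⟩ := hXpos
  have huy : 0 < u y := hu0 ▸ humono hX0 hy hy0
  have hs : s ∈ Ici (0:ℝ) := le_of_lt (ht.trans_lt hts)
  have hDt := hDpos t ht
  have hr : D s / D t ∈ Icc (0:ℝ) 1 :=
    ⟨(div_pos (hDpos s hs) hDt).le, (div_le_one hDt).2 (hDanti ht hs hts).le⟩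
  obtain ⟨x, hx, hux⟩ := hucont.exists_mem_eq_mul hX hX0 hu0 hy hy0.le huy.le hr
  have hindiff : D t * u x = D s * u y := by rw [hux]; field_simp
  have hdelay := h x hx y hy σ hσ t s ht hts hindiff.le
  rw [hux] at hdelay
  have : D (t + σ) * D s * u y ≤ D t * D (s + σ) * u y := calc
    D (t + σ) * D s * u y = D t * (D (t + σ) * (D s / D t * u y)) := by field_simp
    _ ≤ D t * (D (s + σ) * u y) := mul_le_mul_of_nonneg_left hdelay hDt.le
    _ = D t * D (s + σ) * u y := by ring
  exact le_of_mul_le_mul_right this huy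

theorem DecreasingImpatience.presentBiased {X : Set ℝ} {u D : ℝ → ℝ} (hXsub : X ⊆ Ici 0)
    (hX0 : 0 ∈ X) (humono : StrictMonoOn u X) (hu0 : u 0 = 0)
    (hDpos : ∀ t ∈ Ici (0:ℝ), 0 < D t) (h : DecreasingImpatience D) : PresentBiased X u D := by
  intro x hx y hy σ hσ t s ht hts hpref
  have hux : 0 ≤ u x := hu0 ▸ humono.monotoneOn hX0 hx (hXsub hx)
  have hs : s ∈ Ici (0:ℝ) := le_of_lt (ht.trans_lt hts)
  have hsσ : s + σ ∈ Ici (0:ℝ) := by simp only [mem_Ici] at hs ⊢; linarith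
  have : D (t + σ) * u x * D s ≤ D (s + σ) * u y * D s := calc
    D (t + σ) * u x * D s = D (t + σ) * D s * u x := by ring
    _ ≤ D t * D (s + σ) * u x := mul_le_mul_of_nonneg_right (h t s σ ht hts hσ) hux
    _ = D (s + σ) * (D t * u x) := by ring
    _ ≤ D (s + σ) * (D s * u y) := mul_le_mul_of_nonneg_left hpref (hDpos _ hsσ).le
    _ = D (s + σ) * u y * D s := by ring
  exact le_of_mul_le_mul_right this (hDpos s hs)

theorem present_bias_stationarity_iff_logConvex_general
    (X : Set ℝ) (hXsub : X ⊆ Ici 0) (hX0 : (0:ℝ) ∈ X) (hXconv : Convex ℝ X)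
    (hXpos : ∃ x ∈ X, 0 < x)
    (u : ℝ → ℝ) (hucont : ContinuousOn u X) (humono : StrictMonoOn u X)
    (hu0 : u 0 = 0)
    (D : ℝ → ℝ) (hDcont : ContinuousOn D (Ici 0)) (hDanti : StrictAntiOn D (Ici 0))
    (hDpos : ∀ t ∈ Ici (0:ℝ), 0 < D t) :
    (∀ x ∈ X, ∀ y ∈ X, ∀ σ : ℝ, 0 < σ → ∀ t s : ℝ, 0 ≤ t → t < s →
        D t * u x ≤ D s * u y → D (t + σ) * u x ≤ D (s + σ) * u y) ↔
      ConvexOn ℝ (Ici 0) (fun t => Real.log (D t)) := by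
  change PresentBiased X u D ↔ _
  rw [← decreasingImpatience_iff_convexOn_log hDcont hDpos]
  exact ⟨PresentBiased.decreasingImpatience hXconv.ordConnected hX0 hXpos hucont humono hu0
      hDanti hDpos, DecreasingImpatience.presentBiased hXsub hX0 humono hu0 hDpos⟩

/-- For a discounted utility representation `U(x,t) = D(t)u(x)`, the first present-bias
condition ("`(x,t) ≼ (y,s)` implies `(x,t+σ) ≼ (y,s+σ)`") holds iff `ln D` is convex
on `[0,∞)`. -/
theorem present_bias_stationarity_iff_logConvex
    (X : Set ℝ) (hXsub : X ⊆ Ici 0) (hX0 : (0:ℝ) ∈ X) (hXconv : Convex ℝ X)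
    (hXpos : ∃ x ∈ X, 0 < x)
    (u : ℝ → ℝ) (hucont : ContinuousOn u X) (humono : StrictMonoOn u X)
    (hu0 : u 0 = 0)
    (D : ℝ → ℝ) (hDcont : ContinuousOn D (Ici 0)) (hDanti : StrictAntiOn D (Ici 0))
    (hDpos : ∀ t ∈ Ici (0:ℝ), 0 < D t) (hDle : ∀ t ∈ Ici (0:ℝ), D t ≤ 1)
    (hD0 : D 0 = 1) (hDlim : Filter.Tendsto D Filter.atTop (nhds 0)) :
    (∀ x ∈ X, ∀ y ∈ X, ∀ σ : ℝ, 0 < σ → ∀ t s : ℝ, 0 ≤ t → t < s →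
        D t * u x ≤ D s * u y → D (t + σ) * u x ≤ D (s + σ) * u y) ↔
      ConvexOn ℝ (Ici 0) (fun t => Real.log (D t)) :=
  present_bias_stationarity_iff_logConvex_general X hXsub hX0 hXconv hXpos u hucont humono hu0 D
    hDcont hDanti hDpos
end
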